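/- Let m, λ, a, b be real constants. Define f(u,v) = −1 + cos²(au) + cos²(bv), g(u,v) = 0, and r(u,v) = 2m − 4λ²uv + (1/32)(2 − cos(4au) − cos(4bv)) − (1/4)(a²u² + b²v²). Then ∂_u∂_v r = −4λ², ∂_u∂_u r = −(∂_u f)², and ∂_v∂_v r = −(∂_v f)² at every point (u,v) ∈ ℝ². -/

import Mathlib

/-!
Both `r` and `f` separate into a bilinear term plus one-variable profiles, so the mixed derivative
only sees `-4λ²uv`, while each pure second derivative only sees one profile
`P_c(x) = (1 - cos 4cx)/32 - c²x²/4`. Since `cos 4θ = 1 - 2 sin² 2θ` we get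
`P_c'' = -c² sin² 2cx`, and `2 sin θ cos θ = sin 2θ` gives `(cos² cx)' = -c sin 2cx`.
-/

open Real

noncomputable def cghsProfile (c x : ℝ) : ℝ :=
  (1 - cos (4 * c * x)) / 32 - c ^ 2 * x ^ 2 / 4

theorem hasDerivAt_cghsProfile (c x : ℝ) :
    HasDerivAt (cghsProfile c) (c * sin (4 * c * x) / 8 - c ^ 2 * x / 2) x := by
  have hcos : HasDerivAt (fun x => cos (4 * c * x)) (-sin (4 * c * x) * (4 * c)) x :=
    (hasDerivAt_const_mul (4 * c)).cos
  have hsq : HasDerivAt (fun x => c ^ 2 * x ^ 2) (c ^ 2 * (2 * x)) x := by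
    simpa using (hasDerivAt_pow 2 x).const_mul (c ^ 2)
  refine (((hcos.const_sub 1).div_const 32).sub (hsq.div_const 4)).congr_deriv ?_
  ring

theorem differentiable_cghsProfile (c : ℝ) : Differentiable ℝ (cghsProfile c) :=
  fun x => (hasDerivAt_cghsProfile c x).differentiableAt

theorem deriv_cghsProfile (c : ℝ) :
    deriv (cghsProfile c) = fun x => c * sin (4 * c * x) / 8 - c ^ 2 * x / 2 :=
  funext fun x => (hasDerivAt_cghsProfile c x).deriv

theorem hasDerivAt_deriv_cghsProfile (c x : ℝ) :
    HasDerivAt (deriv (cghsProfile c)) (-(c * sin (2 * c * x)) ^ 2) x := by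
  have hsin : HasDerivAt (fun x => sin (4 * c * x)) (cos (4 * c * x) * (4 * c)) x :=
    (hasDerivAt_const_mul (4 * c)).sin
  have hlin : HasDerivAt (fun x => c ^ 2 * x / 2) (c ^ 2 / 2) x := by
    simpa using (hasDerivAt_const_mul (c ^ 2)).div_const 2
  have hdouble : cos (4 * c * x) = 1 - 2 * sin (2 * c * x) ^ 2 := by
    rw [show 4 * c * x = 2 * (2 * c * x) by ring, cos_two_mul, cos_sq']
    ring
  rw [deriv_cghsProfile]
  refine (((hsin.const_mul c).div_const 8).sub hlin).congr_deriv ?_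
  rw [hdouble]
  ring

theorem hasDerivAt_cos_mul_sq (c x : ℝ) :
    HasDerivAt (fun x => cos (c * x) ^ 2) (-(c * sin (2 * c * x))) x := by
  have hcos : HasDerivAt (fun x => cos (c * x)) (-sin (c * x) * c) x :=
    (hasDerivAt_const_mul c).cos
  refine (hcos.pow 2).congr_deriv ?_
  rw [show 2 * c * x = 2 * (c * x) by ring, sin_two_mul]
  norm_num
  ring

theorem deriv_const_add_mul_add {p : ℝ → ℝ} (hp : Differentiable ℝ p) (k c : ℝ) :
    deriv (fun x => k + c * x + p x) = fun x => c + deriv p x :=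
  funext fun x => (((hasDerivAt_const_mul c).const_add k).add (hp x).hasDerivAt).deriv

theorem stmt_1_general (m lam a b : ℝ)
    (f : ℝ → ℝ → ℝ)
    (hf : f = fun u v => -1 + Real.cos (a * u) ^ 2 + Real.cos (b * v) ^ 2)
    (r : ℝ → ℝ → ℝ)
    (hr : r = fun u v =>
      2 * m - 4 * lam ^ 2 * u * v
        + (1 / 32) * (2 - Real.cos (4 * a * u) - Real.cos (4 * b * v))
        - (1 / 4) * (a ^ 2 * u ^ 2 + b ^ 2 * v ^ 2)) :
    ∀ u v : ℝ,
      deriv (fun x => deriv (fun y => r x y) v) u = -4 * lam ^ 2 ∧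
      deriv (fun x => deriv (fun x' => r x' v) x) u
        = -(deriv (fun x => f x v) u) ^ 2 ∧
      deriv (fun y => deriv (fun y' => r u y') y) v
        = -(deriv (fun y => f u y) v) ^ 2 := by
  intro u v
  have hr_u : ∀ y, (fun x => r x y) =
      fun x => (2 * m + cghsProfile b y) + (-4 * lam ^ 2 * y) * x + cghsProfile a x := by
    intro y; funext x; simp only [hr, cghsProfile]; ring
  have hr_v : ∀ x, (fun y => r x y) =
      fun y => (2 * m + cghsProfile a x) + (-4 * lam ^ 2 * x) * y + cghsProfile b y := by
    intro x; funext y; simp only [hr, cghsProfile]; ring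
  have hf_u : HasDerivAt (fun x => f x v) (-(a * sin (2 * a * u))) u := by
    simpa [hf] using ((hasDerivAt_cos_mul_sq a u).const_add (-1)).add_const (cos (b * v) ^ 2)
  have hf_v : HasDerivAt (fun y => f u y) (-(b * sin (2 * b * v))) v := by
    simpa [hf] using (hasDerivAt_cos_mul_sq b v).const_add (-1 + cos (a * u) ^ 2)
  refine ⟨?_, ?_, ?_⟩
  · simp_rw [hr_v, deriv_const_add_mul_add (differentiable_cghsProfile b)]
    simp
  · simp_rw [hr_u, deriv_const_add_mul_add (differentiable_cghsProfile a), deriv_const_add,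
      hf_u.deriv, neg_sq]
    exact (hasDerivAt_deriv_cghsProfile a u).deriv
  · simp_rw [hr_v, deriv_const_add_mul_add (differentiable_cghsProfile b), deriv_const_add,
      hf_v.deriv, neg_sq]
    exact (hasDerivAt_deriv_cghsProfile b v).deriv

/-- For the CGHS interaction region of two colliding bounded
real fields `f(u,v) = −1 + cos²(au) + cos²(bv)`, ghost field `g = 0`, and
`r(u,v) = 2m − 4λ²uv + (1/32)(2 − cos(4au) − cos(4bv)) − (1/4)(a²u² + b²v²)`,
the CGHS field equations hold at every point of `ℝ²`. -/
theorem stmt_1 (m lam a b : ℝ)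
    (f : ℝ → ℝ → ℝ)
    (hf : f = fun u v => -1 + Real.cos (a * u) ^ 2 + Real.cos (b * v) ^ 2)
    (g : ℝ → ℝ → ℝ) (hg : g = fun _ _ => (0 : ℝ))
    (r : ℝ → ℝ → ℝ)
    (hr : r = fun u v =>
      2 * m - 4 * lam ^ 2 * u * v
        + (1 / 32) * (2 - Real.cos (4 * a * u) - Real.cos (4 * b * v))
        - (1 / 4) * (a ^ 2 * u ^ 2 + b ^ 2 * v ^ 2)) :
    ∀ u v : ℝ,
      deriv (fun x => deriv (fun y => r x y) v) u = -4 * lam ^ 2 ∧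
      deriv (fun x => deriv (fun x' => r x' v) x) u
        = -(deriv (fun x => f x v) u) ^ 2 ∧
      deriv (fun y => deriv (fun y' => r u y') y) v
        = -(deriv (fun y => f u y) v) ^ 2 :=
  stmt_1_general m lam a b f hf r hr
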